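/- Let M be a real symmetric 3×3 matrix and set M̄ := (1/2)(tr(M) I₃ − M). Then for every R ∈ SO(3): λ_min(M̄) · tr(I₃ − R) ≤ tr((I₃ − R) M) ≤ λ_max(M̄) · tr(I₃ − R), where λ_min(M̄) and λ_max(M̄) denote the smallest and largest eigenvalues of the symmetric matrix M̄. (Equivalently, with |R|_I² := tr(I₃ − R)/4, one has 4 λ_min(M̄) |R|_I² ≤ tr((I₃ − R) M) ≤ 4 λ_max(M̄) |R|_I².) -/

import Mathlib

open Matrix

/-- `SO(3)`: real 3×3 matrices with `Rᵀ R = I₃` and `det R = 1`. -/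
def SO3 (R : Matrix (Fin 3) (Fin 3) ℝ) : Prop := Rᵀ * R = 1 ∧ R.det = 1

lemma adj3 (A : Matrix (Fin 3) (Fin 3) ℝ) :
    adjugate A = A*A - A.trace • A + (((A.trace)^2 - (A*A).trace)/2) • (1 : Matrix (Fin 3) (Fin 3) ℝ) := by
  ext i j
  fin_cases i <;> fin_cases j <;>
    simp [adjugate_fin_three, Matrix.mul_apply, Matrix.trace, Matrix.diag,
      Fin.sum_univ_three, Matrix.one_apply] <;> ring

lemma S_psd (R : Matrix (Fin 3) (Fin 3) ℝ) (hR : SO3 R) :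
    PosSemidef ((1 - R.trace) • (1 : Matrix (Fin 3) (Fin 3) ℝ) + R + Rᵀ) := by
  obtain ⟨ho, hd⟩ := hR
  have hRRt : R * Rᵀ = 1 := mul_eq_one_comm.mp ho
  have hadj : adjugate R = Rᵀ := by
    have h1 : R * adjugate R = 1 := by rw [mul_adjugate, hd, one_smul]
    calc adjugate R = (Rᵀ * R) * adjugate R := by rw [ho, one_mul]
      _ = Rᵀ * (R * adjugate R) := by rw [mul_assoc]
      _ = Rᵀ := by rw [h1, mul_one]
  set t := R.trace with ht
  have key := adj3 R
  rw [hadj] at key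
  have hc : ((t^2 - (R*R).trace)/2) = t := by
    have h2 := congrArg Matrix.trace key
    simp only [trace_add, trace_sub, trace_smul, trace_one, trace_transpose, smul_eq_mul,
      Fintype.card_fin, Nat.cast_ofNat] at h2
    nlinarith [h2]
  rw [hc] at key
  have h1 : R * R = Rᵀ + t • R - t • (1 : Matrix (Fin 3) (Fin 3) ℝ) := by rw [key]; module
  have h2 : Rᵀ * Rᵀ = R + t • Rᵀ - t • (1 : Matrix (Fin 3) (Fin 3) ℝ) := by
    have h2' := congrArg Matrix.transpose h1
    simp only [transpose_mul, transpose_add, transpose_sub, transpose_smul, transpose_one,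
      transpose_transpose] at h2'
    exact h2'
  set S := (1 - t) • (1 : Matrix (Fin 3) (Fin 3) ℝ) + R + Rᵀ with hS
  have hS2 : S * S = (3 - t) • S := by
    rw [hS]
    simp only [add_mul, mul_add, smul_mul_assoc, mul_smul_comm, one_mul, mul_one, h1, h2, ho, hRRt]
    module
  have hSt : Sᵀ = S := by
    rw [hS]
    simp [transpose_add, transpose_smul, transpose_one]
    abel
  have ht3 : t ≤ 3 := by
    have e0 := congrFun (congrFun ho 0) 0
    have e1 := congrFun (congrFun ho 1) 1
    have e2 := congrFun (congrFun ho 2) 2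
    simp [Matrix.mul_apply, Matrix.one_apply, Fin.sum_univ_three] at e0 e1 e2
    have : t = R 0 0 + R 1 1 + R 2 2 := by
      simp [ht, Matrix.trace, Matrix.diag, Fin.sum_univ_three]
    rw [this]
    nlinarith [sq_nonneg (R 0 0 - 1), sq_nonneg (R 1 1 - 1), sq_nonneg (R 2 2 - 1),
      sq_nonneg (R 0 1), sq_nonneg (R 0 2), sq_nonneg (R 1 2)]
  refine Matrix.PosSemidef.of_dotProduct_mulVec_nonneg ?_ ?_
  · show Sᴴ = S
    ext i j
    rw [conjTranspose_apply]
    show S j i = S i j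
    conv_lhs => rw [← hSt]
    rfl
  · intro x
    have hq : (S *ᵥ x) ⬝ᵥ (S *ᵥ x) = (3 - t) * (x ⬝ᵥ S *ᵥ x) := by
      have e1 : x ⬝ᵥ (Sᵀ *ᵥ (S *ᵥ x)) = (S *ᵥ x) ⬝ᵥ (S *ᵥ x) := by
        rw [dotProduct_mulVec, vecMul_transpose]
      calc (S *ᵥ x) ⬝ᵥ (S *ᵥ x) = x ⬝ᵥ (Sᵀ *ᵥ (S *ᵥ x)) := e1.symm
        _ = x ⬝ᵥ ((S * S) *ᵥ x) := by rw [hSt, mulVec_mulVec]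
        _ = (3 - t) * (x ⬝ᵥ S *ᵥ x) := by rw [hS2, smul_mulVec, dotProduct_smul, smul_eq_mul]
    simp only [star_trivial]
    rcases lt_or_eq_of_le ht3 with h | h
    · have hpos : 0 < 3 - t := by linarith
      have hnn : 0 ≤ (S *ᵥ x) ⬝ᵥ (S *ᵥ x) := by
        unfold dotProduct
        exact Finset.sum_nonneg fun i _ => mul_self_nonneg _
      nlinarith [hq, hnn]
    · have h0 : (S *ᵥ x) ⬝ᵥ (S *ᵥ x) = 0 := by rw [hq, ← h]; ring
      have : S *ᵥ x = 0 := dotProduct_self_eq_zero.mp h0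
      rw [this, dotProduct_zero]


lemma psd_trace_nonneg {n : ℕ} (A : Matrix (Fin n) (Fin n) ℝ) (hA : A.PosSemidef) :
    0 ≤ A.trace := by
  rw [Matrix.trace]
  apply Finset.sum_nonneg
  intro i _
  have := hA.dotProduct_mulVec_nonneg (Pi.single i 1)
  simpa [Matrix.mulVec_single, dotProduct, Pi.single_apply, Matrix.diag] using this

open scoped MatrixOrder in
lemma psd_trace_mul_nonneg {n : ℕ} (N S : Matrix (Fin n) (Fin n) ℝ)
    (hN : N.PosSemidef) (hS : S.PosSemidef) : 0 ≤ (N * S).trace := by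
  obtain ⟨B, rfl⟩ := CStarAlgebra.nonneg_iff_eq_star_mul_self.mp hN.nonneg
  rw [mul_assoc, Matrix.trace_mul_comm]
  exact psd_trace_nonneg _ (hS.mul_mul_conjTranspose_same B)

lemma shift_psd
    (Mbar : Matrix (Fin 3) (Fin 3) ℝ) (hsym : Mbar.IsHermitian)
    (lmin : ℝ)
    (hlmin₂ : ∀ (w : Fin 3 → ℝ) (μ : ℝ), w ≠ 0 → Mbar.mulVec w = μ • w → lmin ≤ μ) :
    (Mbar - lmin • (1 : Matrix (Fin 3) (Fin 3) ℝ)).PosSemidef := by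
  have h1 : Mbarᵀ = Mbar := by
    rw [← conjTranspose_eq_transpose_of_trivial]; exact hsym.eq
  have hH : (Mbar - lmin • (1 : Matrix (Fin 3) (Fin 3) ℝ)).IsHermitian := by
    simp [Matrix.IsHermitian, conjTranspose_sub, conjTranspose_smul, conjTranspose_one,
      conjTranspose_eq_transpose_of_trivial, h1]
  apply hH.posSemidef_iff_eigenvalues_nonneg.mpr
  intro i
  show 0 ≤ hH.eigenvalues i
  have hv := hH.mulVec_eigenvectorBasis i
  have hvne : (⇑(hH.eigenvectorBasis i) : Fin 3 → ℝ) ≠ 0 := by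
    intro h
    apply hH.eigenvectorBasis.toBasis.ne_zero i
    apply (WithLp.equiv 2 _).injective
    simpa [WithLp.ofLp_zero] using h
  have hMv : Mbar *ᵥ ⇑(hH.eigenvectorBasis i) =
      (hH.eigenvalues i + lmin) • ⇑(hH.eigenvectorBasis i) := by
    rw [Matrix.sub_mulVec, Matrix.smul_mulVec, Matrix.one_mulVec,
      sub_eq_iff_eq_add] at hv
    rw [hv, add_smul]
  have := hlmin₂ _ _ hvne hMv
  linarith

lemma shift_psd'
    (Mbar : Matrix (Fin 3) (Fin 3) ℝ) (hsym : Mbar.IsHermitian)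
    (lmax : ℝ)
    (hlmax₂ : ∀ (w : Fin 3 → ℝ) (μ : ℝ), w ≠ 0 → Mbar.mulVec w = μ • w → μ ≤ lmax) :
    (lmax • (1 : Matrix (Fin 3) (Fin 3) ℝ) - Mbar).PosSemidef := by
  have h1 : Mbarᵀ = Mbar := by
    rw [← conjTranspose_eq_transpose_of_trivial]; exact hsym.eq
  have hH : (lmax • (1 : Matrix (Fin 3) (Fin 3) ℝ) - Mbar).IsHermitian := by
    simp [Matrix.IsHermitian, conjTranspose_sub, conjTranspose_smul, conjTranspose_one,
      conjTranspose_eq_transpose_of_trivial, h1]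
  apply hH.posSemidef_iff_eigenvalues_nonneg.mpr
  intro i
  show 0 ≤ hH.eigenvalues i
  have hv := hH.mulVec_eigenvectorBasis i
  have hvne : (⇑(hH.eigenvectorBasis i) : Fin 3 → ℝ) ≠ 0 := by
    intro h
    apply hH.eigenvectorBasis.toBasis.ne_zero i
    apply (WithLp.equiv 2 _).injective
    simpa [WithLp.ofLp_zero] using h
  have hMv : Mbar *ᵥ ⇑(hH.eigenvectorBasis i) =
      (lmax - hH.eigenvalues i) • ⇑(hH.eigenvectorBasis i) := by
    rw [Matrix.sub_mulVec, Matrix.smul_mulVec, Matrix.one_mulVec,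
      sub_eq_iff_eq_add] at hv
    rw [sub_smul, hv]
    abel
  have := hlmax₂ _ _ hvne hMv
  linarith


/-- For a symmetric `M`, with `M̄ := (1/2)(tr(M) I − M)`, and `λ_min(M̄)`, `λ_max(M̄)` the
smallest and largest eigenvalues of the symmetric matrix `M̄`, one has for every
`R ∈ SO(3)`:  `λ_min(M̄) tr(I − R) ≤ tr((I − R) M) ≤ λ_max(M̄) tr(I − R)`. -/
theorem trace_bounds_via_Mbar
    (M : Matrix (Fin 3) (Fin 3) ℝ) (hMsym : M.IsSymm)
    (Mbar : Matrix (Fin 3) (Fin 3) ℝ)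
    (hMbar : Mbar = (1/2 : ℝ) • (M.trace • (1 : Matrix (Fin 3) (Fin 3) ℝ) - M))
    (lmin lmax : ℝ)
    (hlmin₁ : ∃ w : Fin 3 → ℝ, w ⬝ᵥ w = 1 ∧ Mbar.mulVec w = lmin • w)
    (hlmin₂ : ∀ (w : Fin 3 → ℝ) (μ : ℝ), w ≠ 0 → Mbar.mulVec w = μ • w → lmin ≤ μ)
    (hlmax₁ : ∃ w : Fin 3 → ℝ, w ⬝ᵥ w = 1 ∧ Mbar.mulVec w = lmax • w)
    (hlmax₂ : ∀ (w : Fin 3 → ℝ) (μ : ℝ), w ≠ 0 → Mbar.mulVec w = μ • w → μ ≤ lmax) :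
    ∀ R : Matrix (Fin 3) (Fin 3) ℝ, SO3 R →
      lmin * (1 - R).trace ≤ ((1 - R) * M).trace ∧
      ((1 - R) * M).trace ≤ lmax * (1 - R).trace := by
  intro R hR
  -- Mbar is symmetric / hermitian
  have hMbarT : Mbarᵀ = Mbar := by
    rw [hMbar]
    simp [transpose_smul, transpose_sub, transpose_one, hMsym.eq]
  have hMbarH : Mbar.IsHermitian := by
    rw [Matrix.IsHermitian, conjTranspose_eq_transpose_of_trivial, hMbarT]
  -- the PSD matrices
  have hS := S_psd R hR
  have hN := shift_psd Mbar hMbarH lmin hlmin₂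
  have hP := shift_psd' Mbar hMbarH lmax hlmax₂
  have h1 := psd_trace_mul_nonneg _ _ hN hS
  have h2 := psd_trace_mul_nonneg _ _ hP hS
  -- scalar abbreviations
  set a := M.trace with ha
  set r := R.trace with hr
  set m := (Mbar * R).trace with hm
  -- trace facts
  have f1 : Mbar.trace = a := by
    rw [hMbar]
    simp [trace_smul, trace_sub, trace_one, ← ha]
    ring
  have f2 : (Mbar * Rᵀ).trace = m := by
    rw [← trace_transpose (Mbar * Rᵀ), transpose_mul, transpose_transpose, hMbarT,
      Matrix.trace_mul_comm]
  have hMM : M = a • (1 : Matrix (Fin 3) (Fin 3) ℝ) - (2:ℝ) • Mbar := by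
    rw [hMbar, ha]; module
  have f4 : (R * M).trace = a * r - 2 * m := by
    rw [hMM]
    simp only [mul_sub, mul_smul_comm, mul_one, trace_sub, trace_smul, smul_eq_mul]
    rw [Matrix.trace_mul_comm]
  have f3 : ((1 - R) * M).trace = a - (a * r - 2 * m) := by
    rw [sub_mul, one_mul, trace_sub, f4, ha]
  have eT : (1 - R).trace = 3 - r := by
    simp [trace_sub, trace_one, ← hr]
  -- expand the two key traces
  have e1 : ((Mbar - lmin • (1 : Matrix (Fin 3) (Fin 3) ℝ)) *
      ((1 - r) • (1 : Matrix (Fin 3) (Fin 3) ℝ) + R + Rᵀ)).trace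
      = (1 - r) * a + 2 * m - lmin * (3 - r) := by
    simp only [sub_mul, smul_mul_assoc, one_mul, mul_add, mul_smul_comm, mul_one,
      trace_sub, trace_add, trace_smul, trace_one, trace_transpose, f1, f2, ← hr,
      smul_eq_mul, ← hm, Fintype.card_fin, Nat.cast_ofNat]
    ring
  have e2 : ((lmax • (1 : Matrix (Fin 3) (Fin 3) ℝ) - Mbar) *
      ((1 - r) • (1 : Matrix (Fin 3) (Fin 3) ℝ) + R + Rᵀ)).trace
      = lmax * (3 - r) - ((1 - r) * a + 2 * m) := by
    simp only [sub_mul, smul_mul_assoc, one_mul, mul_add, mul_smul_comm, mul_one,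
      trace_sub, trace_add, trace_smul, trace_one, trace_transpose, f1, f2, ← hr,
      smul_eq_mul, ← hm, Fintype.card_fin, Nat.cast_ofNat]
    ring
  rw [e1] at h1
  rw [e2] at h2
  rw [f3, eT]
  constructor <;> nlinarith [h1, h2]
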